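/- Let b₂₀, b₁₁, b₀₂, c₂₀ ∈ ℝ with b₀₂ > 0, let p, q, r : ℝ² → ℝ be smooth functions with vanishing 2-jet at the origin, and let f(x,y) = (x, xy + p(x,y), b₂₀x² + b₁₁xy + b₀₂y² + q(x,y), c₂₀x² + r(x,y)). For a = (0, v₂, v₃, v₄) ∈ ℝ⁴, the Hessian of d_a at the origin equals the matrix [[2 − 4b₂₀v₃ − 4c₂₀v₄, −2v₂ − 2b₁₁v₃], [−2v₂ − 2b₁₁v₃, −4b₀₂v₃]], and it is degenerate (has zero determinant) if and only if (v₂ + b₁₁v₃)² − 4b₀₂b₂₀v₃² − 4b₀₂c₂₀v₃v₄ + 2b₀₂v₃ = 0. In particular the focal set at the origin is the zero set of a quadratic polynomial in (v₂, v₃, v₄), i.e. a quadric. -/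

import Mathlib

/-- Partial derivative in the first variable of a function of two real variables. -/
noncomputable def pdx (g : ℝ → ℝ → ℝ) (x y : ℝ) : ℝ := deriv (fun t => g t y) x

/-- Partial derivative in the second variable of a function of two real variables. -/
noncomputable def pdy (g : ℝ → ℝ → ℝ) (x y : ℝ) : ℝ := deriv (fun t => g x t) y

/-- The Hessian matrix at the origin of a function of two real variables. -/
noncomputable def hessAt0 (g : ℝ → ℝ → ℝ) : Matrix (Fin 2) (Fin 2) ℝ :=
  !![pdx (pdx g) 0 0, pdy (pdx g) 0 0;
     pdx (pdy g) 0 0, pdy (pdy g) 0 0]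

/-- A function of two real variables has vanishing 2-jet at the origin: its value and all
first- and second-order partial derivatives vanish at `(0,0)`. -/
noncomputable def jet2ZeroAt0 (g : ℝ → ℝ → ℝ) : Prop :=
  g 0 0 = 0 ∧ pdx g 0 0 = 0 ∧ pdy g 0 0 = 0 ∧ hessAt0 g = 0

lemma hasDerivAt_pdx (p : ℝ → ℝ → ℝ) (hp : ContDiff ℝ (⊤ : ℕ∞) (fun w : ℝ × ℝ => p w.1 w.2))
    (x y : ℝ) : HasDerivAt (fun t => p t y) (pdx p x y) x := by
  have key : HasDerivAt (fun t => p t y)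
      (fderiv ℝ (fun w : ℝ × ℝ => p w.1 w.2) (x, y) (1, 0)) x :=
    ((hp.differentiable (by simp) (x, y)).hasFDerivAt).comp_hasDerivAt x (l := fun w : ℝ × ℝ => p w.1 w.2)
      ((hasDerivAt_id x).prodMk (hasDerivAt_const x y))
  exact key.differentiableAt.hasDerivAt

lemma hasDerivAt_pdy (p : ℝ → ℝ → ℝ) (hp : ContDiff ℝ (⊤ : ℕ∞) (fun w : ℝ × ℝ => p w.1 w.2))
    (x y : ℝ) : HasDerivAt (fun t => p x t) (pdy p x y) y := by
  have key : HasDerivAt (fun t => p x t)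
      (fderiv ℝ (fun w : ℝ × ℝ => p w.1 w.2) (x, y) (0, 1)) y :=
    ((hp.differentiable (by simp) (x, y)).hasFDerivAt).comp_hasDerivAt y
      ((hasDerivAt_const y x).prodMk (hasDerivAt_id y))
  exact key.differentiableAt.hasDerivAt

lemma contDiff_pdx (p : ℝ → ℝ → ℝ) (hp : ContDiff ℝ (⊤ : ℕ∞) (fun w : ℝ × ℝ => p w.1 w.2)) :
    ContDiff ℝ (⊤ : ℕ∞) (fun w : ℝ × ℝ => pdx p w.1 w.2) := by
  have key : ∀ x y : ℝ, HasDerivAt (fun t => p t y)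
      (fderiv ℝ (fun w : ℝ × ℝ => p w.1 w.2) (x, y) (1, 0)) x := fun x y =>
    ((hp.differentiable (by simp) (x, y)).hasFDerivAt).comp_hasDerivAt x (l := fun w : ℝ × ℝ => p w.1 w.2)
      ((hasDerivAt_id x).prodMk (hasDerivAt_const x y))
  have heq : (fun w : ℝ × ℝ => pdx p w.1 w.2)
      = fun w => fderiv ℝ (fun w : ℝ × ℝ => p w.1 w.2) w (1, 0) := by
    funext w
    exact (key w.1 w.2).deriv
  rw [heq]
  exact (hp.fderiv_right (by simp)).clm_apply contDiff_const

lemma contDiff_pdy (p : ℝ → ℝ → ℝ) (hp : ContDiff ℝ (⊤ : ℕ∞) (fun w : ℝ × ℝ => p w.1 w.2)) :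
    ContDiff ℝ (⊤ : ℕ∞) (fun w : ℝ × ℝ => pdy p w.1 w.2) := by
  have key : ∀ x y : ℝ, HasDerivAt (fun t => p x t)
      (fderiv ℝ (fun w : ℝ × ℝ => p w.1 w.2) (x, y) (0, 1)) y := fun x y =>
    ((hp.differentiable (by simp) (x, y)).hasFDerivAt).comp_hasDerivAt y
      ((hasDerivAt_const y x).prodMk (hasDerivAt_id y))
  have heq : (fun w : ℝ × ℝ => pdy p w.1 w.2)
      = fun w => fderiv ℝ (fun w : ℝ × ℝ => p w.1 w.2) w (0, 1) := by
    funext w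
    exact (key w.1 w.2).deriv
  rw [heq]
  exact (hp.fderiv_right (by simp)).clm_apply contDiff_const

lemma jet_facts {g : ℝ → ℝ → ℝ} (h : jet2ZeroAt0 g) :
    g 0 0 = 0 ∧ pdx g 0 0 = 0 ∧ pdy g 0 0 = 0 ∧ pdx (pdx g) 0 0 = 0 ∧
      pdy (pdx g) 0 0 = 0 ∧ pdx (pdy g) 0 0 = 0 ∧ pdy (pdy g) 0 0 = 0 := by
  obtain ⟨h0, h1, h2, h3⟩ := h
  refine ⟨h0, h1, h2, ?_, ?_, ?_, ?_⟩
  · simpa [hessAt0] using congrFun (congrFun h3 0) 0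
  · simpa [hessAt0] using congrFun (congrFun h3 0) 1
  · simpa [hessAt0] using congrFun (congrFun h3 1) 0
  · simpa [hessAt0] using congrFun (congrFun h3 1) 1

lemma hess_main (b₂₀ b₁₁ b₀₂ c₂₀ v₂ v₃ v₄ : ℝ) (p q r : ℝ → ℝ → ℝ)
    (hp : ContDiff ℝ (⊤ : ℕ∞) (fun w : ℝ × ℝ => p w.1 w.2))
    (hq : ContDiff ℝ (⊤ : ℕ∞) (fun w : ℝ × ℝ => q w.1 w.2))
    (hr : ContDiff ℝ (⊤ : ℕ∞) (fun w : ℝ × ℝ => r w.1 w.2))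
    (hpj : jet2ZeroAt0 p) (hqj : jet2ZeroAt0 q) (hrj : jet2ZeroAt0 r) :
    hessAt0 (fun x y => x ^ 2 + (x * y + p x y - v₂) ^ 2
        + (b₂₀ * x ^ 2 + b₁₁ * x * y + b₀₂ * y ^ 2 + q x y - v₃) ^ 2
        + (c₂₀ * x ^ 2 + r x y - v₄) ^ 2)
      = !![2 - 4 * b₂₀ * v₃ - 4 * c₂₀ * v₄, -2 * v₂ - 2 * b₁₁ * v₃;
           -2 * v₂ - 2 * b₁₁ * v₃, -4 * b₀₂ * v₃] := by
  obtain ⟨hp0, hp1, hp2, hp3, hp4, hp5, hp6⟩ := jet_facts hpj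
  obtain ⟨hq0, hq1, hq2, hq3, hq4, hq5, hq6⟩ := jet_facts hqj
  obtain ⟨hr0, hr1, hr2, hr3, hr4, hr5, hr6⟩ := jet_facts hrj
  have hpx := contDiff_pdx p hp
  have hpy := contDiff_pdy p hp
  have hqx := contDiff_pdx q hq
  have hqy := contDiff_pdy q hq
  have hrx := contDiff_pdx r hr
  have hry := contDiff_pdy r hr
  set g : ℝ → ℝ → ℝ := fun x y => x ^ 2 + (x * y + p x y - v₂) ^ 2
      + (b₂₀ * x ^ 2 + b₁₁ * x * y + b₀₂ * y ^ 2 + q x y - v₃) ^ 2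
      + (c₂₀ * x ^ 2 + r x y - v₄) ^ 2 with hg
  -- first-order partial derivatives, everywhere
  have hgx : ∀ x y : ℝ, pdx g x y
      = 2 * x + 2 * (x * y + p x y - v₂) * (y + pdx p x y)
        + 2 * (b₂₀ * x ^ 2 + b₁₁ * x * y + b₀₂ * y ^ 2 + q x y - v₃)
            * (2 * b₂₀ * x + b₁₁ * y + pdx q x y)
        + 2 * (c₂₀ * x ^ 2 + r x y - v₄) * (2 * c₂₀ * x + pdx r x y) := by
    intro x y
    have h1 := hasDerivAt_pow 2 x
    have h2 := ((((hasDerivAt_id x).mul_const y).add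
      (hasDerivAt_pdx p hp x y)).sub_const v₂).pow 2
    have h3 := (((((((hasDerivAt_pow 2 x).const_mul b₂₀).add
        (((hasDerivAt_id x).const_mul b₁₁).mul_const y)).add_const (b₀₂ * y ^ 2)).add
        (hasDerivAt_pdx q hq x y)).sub_const v₃)).pow 2
    have h4 := (((((hasDerivAt_pow 2 x).const_mul c₂₀).add
        (hasDerivAt_pdx r hr x y)).sub_const v₄)).pow 2
    have H := ((h1.add h2).add h3).add h4
    exact H.deriv.trans (by simp only [id_eq, Pi.add_apply, Pi.mul_apply, Pi.sub_apply, Pi.pow_apply, Pi.ofNat_apply]; push_cast; ring)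
  have hgy : ∀ x y : ℝ, pdy g x y
      = 2 * (x * y + p x y - v₂) * (x + pdy p x y)
        + 2 * (b₂₀ * x ^ 2 + b₁₁ * x * y + b₀₂ * y ^ 2 + q x y - v₃)
            * (b₁₁ * x + 2 * b₀₂ * y + pdy q x y)
        + 2 * (c₂₀ * x ^ 2 + r x y - v₄) * (pdy r x y) := by
    intro x y
    have m0 := hasDerivAt_const y (x ^ 2)
    have m1 := ((((hasDerivAt_id y).const_mul x).add
      (hasDerivAt_pdy p hp x y)).sub_const v₂).pow 2
    have m2 := (((((hasDerivAt_const y (b₂₀ * x ^ 2)).add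
        ((hasDerivAt_id y).const_mul (b₁₁ * x))).add
        ((hasDerivAt_pow 2 y).const_mul b₀₂)).add
        (hasDerivAt_pdy q hq x y)).sub_const v₃).pow 2
    have m3 := (((hasDerivAt_const y (c₂₀ * x ^ 2)).add
        (hasDerivAt_pdy r hr x y)).sub_const v₄).pow 2
    have M := ((m0.add m1).add m2).add m3
    exact M.deriv.trans (by simp only [id_eq, Pi.add_apply, Pi.mul_apply, Pi.sub_apply, Pi.pow_apply, Pi.ofNat_apply]; push_cast; ring)
  -- entry (0,0)
  have e00 : pdx (pdx g) 0 0 = 2 - 4 * b₂₀ * v₃ - 4 * c₂₀ * v₄ := by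
    have h1 := (hasDerivAt_id (0:ℝ)).const_mul (2:ℝ)
    have h2 := (((((hasDerivAt_id (0:ℝ)).mul_const (0:ℝ)).add
        (hasDerivAt_pdx p hp 0 0)).sub_const v₂).const_mul 2).mul
      ((hasDerivAt_const (0:ℝ) (0:ℝ)).add (hasDerivAt_pdx (pdx p) hpx 0 0))
    have h3 := ((((((((hasDerivAt_pow 2 (0:ℝ)).const_mul b₂₀).add
        (((hasDerivAt_id (0:ℝ)).const_mul b₁₁).mul_const 0)).add_const
        (b₀₂ * 0 ^ 2)).add (hasDerivAt_pdx q hq 0 0)).sub_const v₃).const_mul 2).mul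
      ((((hasDerivAt_id (0:ℝ)).const_mul (2 * b₂₀)).add_const (b₁₁ * 0)).add
        (hasDerivAt_pdx (pdx q) hqx 0 0)))
    have h4 := ((((((hasDerivAt_pow 2 (0:ℝ)).const_mul c₂₀).add
        (hasDerivAt_pdx r hr 0 0)).sub_const v₄).const_mul 2).mul
      (((hasDerivAt_id (0:ℝ)).const_mul (2 * c₂₀)).add
        (hasDerivAt_pdx (pdx r) hrx 0 0)))
    have H := (((h1.add h2).add h3).add h4).congr_of_eventuallyEq
      (Filter.Eventually.of_forall fun x => hgx x 0)
    exact H.deriv.trans (by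
      simp only [id_eq, Pi.add_apply, Pi.mul_apply, Pi.sub_apply, Pi.pow_apply, Pi.ofNat_apply, hp0, hp1, hp3, hq0, hq1, hq3, hr0, hr1, hr3]
      push_cast; ring)
  -- entry (0,1)
  have e01 : pdy (pdx g) 0 0 = -2 * v₂ - 2 * b₁₁ * v₃ := by
    have k1 := hasDerivAt_const (0:ℝ) ((2:ℝ) * 0)
    have k2 := (((((hasDerivAt_id (0:ℝ)).const_mul (0:ℝ)).add
        (hasDerivAt_pdy p hp 0 0)).sub_const v₂).const_mul 2).mul
      ((hasDerivAt_id (0:ℝ)).add (hasDerivAt_pdy (pdx p) hpx 0 0))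
    have k3 := ((((((hasDerivAt_const (0:ℝ) (b₂₀ * 0 ^ 2)).add
        ((hasDerivAt_id (0:ℝ)).const_mul (b₁₁ * 0))).add
        ((hasDerivAt_pow 2 (0:ℝ)).const_mul b₀₂)).add
        (hasDerivAt_pdy q hq 0 0)).sub_const v₃).const_mul 2).mul
      (((hasDerivAt_const (0:ℝ) (2 * b₂₀ * 0)).add
        ((hasDerivAt_id (0:ℝ)).const_mul b₁₁)).add
        (hasDerivAt_pdy (pdx q) hqx 0 0))
    have k4 := ((((hasDerivAt_const (0:ℝ) (c₂₀ * 0 ^ 2)).add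
        (hasDerivAt_pdy r hr 0 0)).sub_const v₄).const_mul 2).mul
      ((hasDerivAt_const (0:ℝ) (2 * c₂₀ * 0)).add
        (hasDerivAt_pdy (pdx r) hrx 0 0))
    have H := (((k1.add k2).add k3).add k4).congr_of_eventuallyEq
      (Filter.Eventually.of_forall fun t => hgx 0 t)
    exact H.deriv.trans (by
      simp only [id_eq, Pi.add_apply, Pi.mul_apply, Pi.sub_apply, Pi.pow_apply, Pi.ofNat_apply, hp0, hp2, hp4, hq0, hq2, hq4, hr0, hr2, hr4]
      push_cast; ring)
  -- entry (1,0)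
  have e10 : pdx (pdy g) 0 0 = -2 * v₂ - 2 * b₁₁ * v₃ := by
    have n1 := (((((hasDerivAt_id (0:ℝ)).mul_const (0:ℝ)).add
        (hasDerivAt_pdx p hp 0 0)).sub_const v₂).const_mul 2).mul
      ((hasDerivAt_id (0:ℝ)).add (hasDerivAt_pdx (pdy p) hpy 0 0))
    have n2 := ((((((((hasDerivAt_pow 2 (0:ℝ)).const_mul b₂₀).add
        (((hasDerivAt_id (0:ℝ)).const_mul b₁₁).mul_const 0)).add_const
        (b₀₂ * 0 ^ 2)).add (hasDerivAt_pdx q hq 0 0)).sub_const v₃).const_mul 2).mul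
      ((((hasDerivAt_id (0:ℝ)).const_mul b₁₁).add_const (2 * b₀₂ * 0)).add
        (hasDerivAt_pdx (pdy q) hqy 0 0)))
    have n3 := ((((((hasDerivAt_pow 2 (0:ℝ)).const_mul c₂₀).add
        (hasDerivAt_pdx r hr 0 0)).sub_const v₄).const_mul 2).mul
      (hasDerivAt_pdx (pdy r) hry 0 0))
    have H := ((n1.add n2).add n3).congr_of_eventuallyEq
      (Filter.Eventually.of_forall fun x => hgy x 0)
    exact H.deriv.trans (by
      simp only [id_eq, Pi.add_apply, Pi.mul_apply, Pi.sub_apply, Pi.pow_apply, Pi.ofNat_apply, hp0, hp1, hp5, hq0, hq1, hq5, hr0, hr1, hr5]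
      push_cast; ring)
  -- entry (1,1)
  have e11 : pdy (pdy g) 0 0 = -4 * b₀₂ * v₃ := by
    have o1 := (((((hasDerivAt_id (0:ℝ)).const_mul (0:ℝ)).add
        (hasDerivAt_pdy p hp 0 0)).sub_const v₂).const_mul 2).mul
      ((hasDerivAt_const (0:ℝ) (0:ℝ)).add (hasDerivAt_pdy (pdy p) hpy 0 0))
    have o2 := ((((((hasDerivAt_const (0:ℝ) (b₂₀ * 0 ^ 2)).add
        ((hasDerivAt_id (0:ℝ)).const_mul (b₁₁ * 0))).add
        ((hasDerivAt_pow 2 (0:ℝ)).const_mul b₀₂)).add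
        (hasDerivAt_pdy q hq 0 0)).sub_const v₃).const_mul 2).mul
      (((hasDerivAt_const (0:ℝ) (b₁₁ * 0)).add
        ((hasDerivAt_id (0:ℝ)).const_mul (2 * b₀₂))).add
        (hasDerivAt_pdy (pdy q) hqy 0 0))
    have o3 := ((((hasDerivAt_const (0:ℝ) (c₂₀ * 0 ^ 2)).add
        (hasDerivAt_pdy r hr 0 0)).sub_const v₄).const_mul 2).mul
      (hasDerivAt_pdy (pdy r) hry 0 0)
    have H := ((o1.add o2).add o3).congr_of_eventuallyEq
      (Filter.Eventually.of_forall fun t => hgy 0 t)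
    exact H.deriv.trans (by
      simp only [id_eq, Pi.add_apply, Pi.mul_apply, Pi.sub_apply, Pi.pow_apply, Pi.ofNat_apply, hp0, hp2, hp6, hq0, hq2, hq6, hr0, hr2, hr6]
      push_cast; ring)
  unfold hessAt0
  rw [e00, e01, e10, e11]

/-- For the normal form `f(x,y) = (x, xy + p, b₂₀x² + b₁₁xy + b₀₂y² + q, c₂₀x² + r)` and
`a = (0, v₂, v₃, v₄)`, the Hessian of `d_a` at the origin equals
`[[2 − 4b₂₀v₃ − 4c₂₀v₄, −2v₂ − 2b₁₁v₃], [−2v₂ − 2b₁₁v₃, −4b₀₂v₃]]`, and it is degenerate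
iff `(v₂ + b₁₁v₃)² − 4b₀₂b₂₀v₃² − 4b₀₂c₂₀v₃v₄ + 2b₀₂v₃ = 0`; thus the focal set is a quadric. -/
theorem stmt7 (b₂₀ b₁₁ b₀₂ c₂₀ : ℝ) (hb₀₂ : b₀₂ > 0) (p q r : ℝ → ℝ → ℝ)
    (hp : ContDiff ℝ (⊤ : ℕ∞) (fun w : ℝ × ℝ => p w.1 w.2))
    (hq : ContDiff ℝ (⊤ : ℕ∞) (fun w : ℝ × ℝ => q w.1 w.2))
    (hr : ContDiff ℝ (⊤ : ℕ∞) (fun w : ℝ × ℝ => r w.1 w.2))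
    (hpj : jet2ZeroAt0 p) (hqj : jet2ZeroAt0 q) (hrj : jet2ZeroAt0 r) :
    ∀ v₂ v₃ v₄ : ℝ,
      hessAt0 (fun x y => x ^ 2 + (x * y + p x y - v₂) ^ 2
        + (b₂₀ * x ^ 2 + b₁₁ * x * y + b₀₂ * y ^ 2 + q x y - v₃) ^ 2
        + (c₂₀ * x ^ 2 + r x y - v₄) ^ 2)
        = !![2 - 4 * b₂₀ * v₃ - 4 * c₂₀ * v₄, -2 * v₂ - 2 * b₁₁ * v₃;
             -2 * v₂ - 2 * b₁₁ * v₃, -4 * b₀₂ * v₃] ∧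
      ((hessAt0 (fun x y => x ^ 2 + (x * y + p x y - v₂) ^ 2
        + (b₂₀ * x ^ 2 + b₁₁ * x * y + b₀₂ * y ^ 2 + q x y - v₃) ^ 2
        + (c₂₀ * x ^ 2 + r x y - v₄) ^ 2)).det = 0 ↔
        (v₂ + b₁₁ * v₃) ^ 2 - 4 * b₀₂ * b₂₀ * v₃ ^ 2 - 4 * b₀₂ * c₂₀ * v₃ * v₄
          + 2 * b₀₂ * v₃ = 0) := by
  intro v₂ v₃ v₄
  have hM := hess_main b₂₀ b₁₁ b₀₂ c₂₀ v₂ v₃ v₄ p q r hp hq hr hpj hqj hrj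
  refine ⟨hM, ?_⟩
  rw [hM, Matrix.det_fin_two_of]
  have key : (2 - 4 * b₂₀ * v₃ - 4 * c₂₀ * v₄) * (-4 * b₀₂ * v₃)
      - (-2 * v₂ - 2 * b₁₁ * v₃) * (-2 * v₂ - 2 * b₁₁ * v₃)
      = -4 * ((v₂ + b₁₁ * v₃) ^ 2 - 4 * b₀₂ * b₂₀ * v₃ ^ 2
        - 4 * b₀₂ * c₂₀ * v₃ * v₄ + 2 * b₀₂ * v₃) := by ring
  rw [key]
  constructor
  · intro h; linarith
  · intro h; rw [h]; ring
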